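/- Let D ≥ 1, σ > 0, x ∈ ℝ^D and a phase value ψ ∈ ℝ. Let w^c, w^s be i.i.d. N(0, σ²), and let ω ∈ ℝ^D be an independent random vector with distribution N(0, Λ) for a positive semidefinite Λ. Define the phase-shifted trigonometric unit f = w^c cos(ω·x + ψ) + w^s sin(ω·x − ψ). Then for every q ∈ ℝ, the characteristic function satisfies E[exp(i q f)] = exp(−½ q² σ²) · E_ω[exp(½ q² σ² sin(2ψ) sin(2 ω·x))]. In particular, whenever sin(2ψ) ≠ 0 this characteristic function is not that of a Gaussian unless sin(2ω·x) = 0 almost surely. -/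

import Mathlib

/-!
Given `θ = ω·x`, the unit is a centred Gaussian of variance
`σ² (cos² (θ + ψ) + sin² (θ - ψ)) = σ² (1 - sin 2θ sin 2ψ)`; integrating its characteristic
function over `θ` gives the formula. If the unit were Gaussian, comparing moduli of characteristic
functions gives `E[exp (q² c sin 2θ)] = exp (q² a)` for all `q`, with `c = σ² sin (2ψ) / 2 ≠ 0`.
At `q² = 1` and `q² = 2` this says that `exp (c sin 2θ)` has variance zero, so `sin 2θ` is almost
surely constant, and the constant is `0` because the law of `θ` is symmetric.
-/

open MeasureTheory ProbabilityTheory Real Matrix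
open scoped ENNReal NNReal Complex
open Complex (I)

noncomputable def phaseShiftedUnit (ψ w₁ w₂ θ : ℝ) : ℝ :=
  w₁ * cos (θ + ψ) + w₂ * sin (θ - ψ)

lemma cos_add_sq_add_sin_sub_sq (θ ψ : ℝ) :
    cos (θ + ψ) ^ 2 + sin (θ - ψ) ^ 2 = 1 - sin (2 * θ) * sin (2 * ψ) := by
  rw [cos_add, sin_sub, sin_two_mul, sin_two_mul]
  linear_combination (sin ψ ^ 2 + cos ψ ^ 2) * sin_sq_add_cos_sq θ + sin_sq_add_cos_sq ψ

lemma integral_cexp_prod_gaussianReal (v : ℝ≥0) (a b : ℝ) :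
    ∫ w : ℝ × ℝ, cexp (↑(a * w.1 + b * w.2) * I) ∂(gaussianReal 0 v).prod (gaussianReal 0 v)
      = rexp (-(v * (a ^ 2 + b ^ 2) / 2)) := by
  have h (w : ℝ × ℝ) :
      cexp (↑(a * w.1 + b * w.2) * I) = cexp (a * w.1 * I) * cexp (b * w.2 * I) := by
    rw [← Complex.exp_add]
    push_cast
    ring_nf
  simp_rw [h]
  rw [integral_prod_mul (fun w : ℝ => cexp (a * w * I)) (fun w : ℝ => cexp (b * w * I)),
    ← charFun_apply_real, ← charFun_apply_real, charFun_gaussianReal, charFun_gaussianReal,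
    ← Complex.exp_add]
  push_cast
  ring_nf

lemma integral_cexp_phaseShiftedUnit_prod (v : ℝ≥0) (ν : Measure ℝ) [IsFiniteMeasure ν]
    (q ψ : ℝ) :
    ∫ p, cexp (q * phaseShiftedUnit ψ p.1.1 p.1.2 p.2 * I)
        ∂((gaussianReal 0 v).prod (gaussianReal 0 v)).prod ν
      = ↑(∫ θ, rexp (-(1 / 2) * q ^ 2 * v)
          * rexp ((1 / 2) * q ^ 2 * v * sin (2 * ψ) * sin (2 * θ)) ∂ν) := by
  have hint : Integrable (fun p : (ℝ × ℝ) × ℝ => cexp (q * phaseShiftedUnit ψ p.1.1 p.1.2 p.2 * I))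
      (((gaussianReal 0 v).prod (gaussianReal 0 v)).prod ν) :=
    Integrable.of_bound (by unfold phaseShiftedUnit; fun_prop) 1
      (.of_forall fun p => by norm_cast; rw [Complex.norm_exp_ofReal_mul_I])
  rw [integral_prod_symm _ hint, ← integral_complex_ofReal]
  congr 1 with θ
  have h (w : ℝ × ℝ) : (q : ℂ) * phaseShiftedUnit ψ w.1 w.2 θ
      = ↑((q * cos (θ + ψ)) * w.1 + (q * sin (θ - ψ)) * w.2) := by
    unfold phaseShiftedUnit
    push_cast
    ring
  simp_rw [h, integral_cexp_prod_gaussianReal, ← Real.exp_add]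
  congr 2
  linear_combination (-(v : ℝ) * q ^ 2 / 2) * cos_add_sq_add_sin_sub_sq θ ψ

lemma map_prodMk_prodMk_eq_prod_of_indepFun {Ω α β γ : Type*} [MeasurableSpace Ω]
    [MeasurableSpace α] [MeasurableSpace β] [MeasurableSpace γ] {μ : Measure Ω} [IsFiniteMeasure μ]
    {X : Ω → α} {Y : Ω → β} {Z : Ω → γ}
    (hX : AEMeasurable X μ) (hY : AEMeasurable Y μ) (hZ : AEMeasurable Z μ)
    (hXY : IndepFun X Y μ) (hXYZ : IndepFun (fun ω => (X ω, Y ω)) Z μ) :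
    μ.map (fun ω => ((X ω, Y ω), Z ω)) = ((μ.map X).prod (μ.map Y)).prod (μ.map Z) := by
  rw [(indepFun_iff_map_prod_eq_prod_map_map (hX.prodMk hY) hZ).1 hXYZ,
    (indepFun_iff_map_prod_eq_prod_map_map hX hY).1 hXY]

theorem charFun_map_phaseShiftedUnit {Ω : Type*} [MeasurableSpace Ω] {μ : Measure Ω}
    [IsFiniteMeasure μ] {X Y θ : Ω → ℝ} (hX : AEMeasurable X μ) (hY : AEMeasurable Y μ)
    (hθ : AEMeasurable θ μ) {v : ℝ≥0}
    (hlaw : μ.map (fun ω => ((X ω, Y ω), θ ω))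
      = ((gaussianReal 0 v).prod (gaussianReal 0 v)).prod (μ.map θ)) (ψ q : ℝ) :
    charFun (μ.map fun ω => phaseShiftedUnit ψ (X ω) (Y ω) (θ ω)) q
      = ↑(rexp (-(1 / 2) * q ^ 2 * v)
          * ∫ ω, rexp ((1 / 2) * q ^ 2 * v * sin (2 * ψ) * sin (2 * θ ω)) ∂μ) := by
  have hF : Measurable fun p : (ℝ × ℝ) × ℝ => phaseShiftedUnit ψ p.1.1 p.1.2 p.2 := by
    unfold phaseShiftedUnit
    fun_prop
  have hmap : (μ.map fun ω => phaseShiftedUnit ψ (X ω) (Y ω) (θ ω))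
      = (μ.map fun ω => ((X ω, Y ω), θ ω)).map fun p => phaseShiftedUnit ψ p.1.1 p.1.2 p.2 :=
    (AEMeasurable.map_map_of_aemeasurable hF.aemeasurable ((hX.prodMk hY).prodMk hθ)).symm
  rw [hmap, hlaw, charFun_apply_real, integral_map hF.aemeasurable (by fun_prop),
    integral_cexp_phaseShiftedUnit_prod, integral_map hθ (by fun_prop), integral_const_mul]

lemma ae_eq_of_integral_exp_eq {Ω : Type*} [MeasurableSpace Ω] {μ : Measure Ω}
    [IsProbabilityMeasure μ] {Y : Ω → ℝ} (hY : AEMeasurable Y μ)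
    (hint : Integrable (fun ω => rexp (2 * Y ω)) μ) {a : ℝ}
    (h₁ : ∫ ω, rexp (Y ω) ∂μ = rexp a) (h₂ : ∫ ω, rexp (2 * Y ω) ∂μ = rexp (2 * a)) :
    ∀ᵐ ω ∂μ, Y ω = a := by
  have hsq (y : ℝ) : rexp y ^ 2 = rexp (2 * y) := by rw [sq, ← Real.exp_add, two_mul]
  have hmem : MemLp (fun ω => rexp (Y ω)) 2 μ :=
    (memLp_two_iff_integrable_sq (by fun_prop)).2 (by simpa only [hsq] using hint)
  have hvar : Var[fun ω => rexp (Y ω); μ] = 0 := by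
    rw [variance_eq_sub hmem]
    simp only [Pi.pow_apply, hsq, h₁, h₂, sub_self]
  filter_upwards [ae_eq_integral_of_variance_eq_zero hmem hvar] with ω hω
  rw [h₁] at hω
  exact Real.exp_injective hω

lemma eq_zero_of_ae_eq_of_map_neg_eq {ν : Measure ℝ} [NeZero ν]
    (hν : ν.map (fun y => -y) = ν) {g : ℝ → ℝ} (hg : Function.Odd g) {k : ℝ}
    (h : ∀ᵐ y ∂ν, g y = k) : k = 0 := by
  have h' : ∀ᵐ y ∂ν, g (-y) = k := by
    rw [← hν] at h
    exact (Homeomorph.neg ℝ).measurableEmbedding.ae_map_iff.1 h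
  obtain ⟨y, hy, hy'⟩ := (h.and h').exists
  rw [hg, hy] at hy'
  linarith

lemma norm_charFun_gaussianReal (m : ℝ) (v : ℝ≥0) (t : ℝ) :
    ‖charFun (gaussianReal m v) t‖ = rexp (-(v * t ^ 2 / 2)) := by
  have h : (t : ℂ) * m * I - v * t ^ 2 / 2 = ↑(-(v * t ^ 2 / 2) : ℝ) + ↑(t * m) * I := by
    push_cast; ring
  rw [charFun_gaussianReal, h, Complex.exp_add, norm_mul, Complex.norm_exp_ofReal,
    Complex.norm_exp_ofReal_mul_I, mul_one]

theorem ae_sin_two_mul_eq_zero_of_integral_exp_eq {Ω : Type*} [MeasurableSpace Ω]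
    {μ : Measure Ω} [IsProbabilityMeasure μ] {θ : Ω → ℝ} (hθ : AEMeasurable θ μ)
    (hθsymm : (μ.map θ).map (fun y => -y) = μ.map θ) {c a : ℝ} (hc : c ≠ 0)
    (h : ∀ q : ℝ, ∫ ω, rexp (q ^ 2 * (c * sin (2 * θ ω))) ∂μ = rexp (q ^ 2 * a)) :
    ∀ᵐ ω ∂μ, sin (2 * θ ω) = 0 := by
  have hint : Integrable (fun ω => rexp (2 * (c * sin (2 * θ ω)))) μ := by
    refine Integrable.of_bound (by fun_prop) (rexp (2 * |c|)) (.of_forall fun ω => ?_)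
    rw [norm_of_nonneg (exp_pos _).le, exp_le_exp]
    have hc_abs := le_abs_self (c * sin (2 * θ ω))
    rw [abs_mul] at hc_abs
    nlinarith [abs_sin_le_one (2 * θ ω), abs_nonneg c]
  have hY : ∀ᵐ ω ∂μ, c * sin (2 * θ ω) = a :=
    ae_eq_of_integral_exp_eq (by fun_prop) hint (by simpa using h 1)
      (by simpa [sq_sqrt zero_le_two] using h √2)
  have := Measure.isProbabilityMeasure_map hθ
  have hk : ∀ᵐ y ∂μ.map θ, sin (2 * y) = a / c := by
    rw [ae_map_iff hθ (measurableSet_eq_fun (by fun_prop) measurable_const)]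
    filter_upwards [hY] with ω hω
    rw [← hω, mul_div_cancel_left₀ _ hc]
  have ha : a / c = 0 :=
    eq_zero_of_ae_eq_of_map_neg_eq hθsymm (fun y => by rw [mul_neg, sin_neg]) hk
  filter_upwards [hY] with ω hω
  rw [div_eq_zero_iff, or_iff_left hc] at ha
  simpa [ha, hc] using hω

theorem ae_sin_two_mul_eq_zero_of_map_phaseShiftedUnit_eq_gaussianReal {Ω : Type*}
    [MeasurableSpace Ω] {μ : Measure Ω} [IsProbabilityMeasure μ] {X Y θ : Ω → ℝ}
    (hX : AEMeasurable X μ) (hY : AEMeasurable Y μ) (hθ : AEMeasurable θ μ) {v : ℝ≥0}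
    (hlaw : μ.map (fun ω => ((X ω, Y ω), θ ω))
      = ((gaussianReal 0 v).prod (gaussianReal 0 v)).prod (μ.map θ))
    (hθsymm : (μ.map θ).map (fun y => -y) = μ.map θ) (hv : v ≠ 0) {ψ : ℝ} (hψ : sin (2 * ψ) ≠ 0)
    {m : ℝ} {v' : ℝ≥0}
    (hmap : μ.map (fun ω => phaseShiftedUnit ψ (X ω) (Y ω) (θ ω)) = gaussianReal m v') :
    ∀ᵐ ω ∂μ, sin (2 * θ ω) = 0 := by
  refine ae_sin_two_mul_eq_zero_of_integral_exp_eq hθ hθsymm (c := v / 2 * sin (2 * ψ))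
    (a := (v - v') / 2) (mul_ne_zero (by positivity) hψ) fun q => ?_
  have h := congrArg norm (charFun_map_phaseShiftedUnit hX hY hθ hlaw ψ q)
  rw [hmap, norm_charFun_gaussianReal, Complex.norm_real,
    norm_of_nonneg (by positivity)] at h
  have hI : ∫ ω, rexp (q ^ 2 * (v / 2 * sin (2 * ψ) * sin (2 * θ ω))) ∂μ
      = ∫ ω, rexp (1 / 2 * q ^ 2 * v * sin (2 * ψ) * sin (2 * θ ω)) ∂μ := by
    congr 1 with ω
    ring_nf
  refine mul_left_cancel₀ (exp_pos (-(1 / 2) * q ^ 2 * v)).ne' ?_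
  rw [hI, ← h, ← exp_add]
  ring_nf

theorem stmt9 {Ω : Type*} [MeasurableSpace Ω] (μ : Measure Ω) [IsProbabilityMeasure μ]
    (D : ℕ) (σ : ℝ) (hσ : 0 < σ) (x : Fin D → ℝ) (ψ : ℝ)
    (Λ : Matrix (Fin D) (Fin D) ℝ)
    (wc ws : Ω → ℝ) (freq : Ω → Fin D → ℝ)
    (hmeas : Measurable freq)
    (hindep : iIndepFun
      (β := Sum.elim (fun _ : Fin 2 => ℝ) (fun _ : Unit => Fin D → ℝ))
      (m := fun i => match i with
        | Sum.inl _ => inferInstanceAs (MeasurableSpace ℝ)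
        | Sum.inr _ => inferInstanceAs (MeasurableSpace (Fin D → ℝ)))
      (fun i => match i with
        | Sum.inl ⟨0, _⟩ => wc
        | Sum.inl ⟨1, _⟩ => ws
        | Sum.inr _ => freq) μ)
    (hwc : Measure.map wc μ = gaussianReal 0 (Real.toNNReal (σ ^ 2)))
    (hws : Measure.map ws μ = gaussianReal 0 (Real.toNNReal (σ ^ 2)))
    (hfreq : ∀ t : Fin D → ℝ,
      Measure.map (fun ω => freq ω ⬝ᵥ t) μ
        = gaussianReal 0 (Real.toNNReal (t ⬝ᵥ Λ.mulVec t))) :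
    (∀ q : ℝ,
      ∫ ω, Complex.exp (Complex.I * q *
          (wc ω * Real.cos (freq ω ⬝ᵥ x + ψ) + ws ω * Real.sin (freq ω ⬝ᵥ x - ψ))) ∂μ
        = (Real.exp (-(1 / 2) * q ^ 2 * σ ^ 2) *
            ∫ ω, Real.exp ((1 / 2) * q ^ 2 * σ ^ 2
              * Real.sin (2 * ψ) * Real.sin (2 * (freq ω ⬝ᵥ x))) ∂μ : ℝ))
    ∧ (Real.sin (2 * ψ) ≠ 0 →
        ∀ m : ℝ, ∀ v : ℝ≥0,
          Measure.map (fun ω =>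
              wc ω * Real.cos (freq ω ⬝ᵥ x + ψ) + ws ω * Real.sin (freq ω ⬝ᵥ x - ψ)) μ
            = gaussianReal m v →
          ∀ᵐ ω ∂μ, Real.sin (2 * (freq ω ⬝ᵥ x)) = 0) := by
  set θ : Ω → ℝ := fun ω => freq ω ⬝ᵥ x
  have hθ : Measurable θ := by fun_prop
  have hwc' : AEMeasurable wc μ := aemeasurable_of_map_neZero (by rw [hwc]; infer_instance)
  have hws' : AEMeasurable ws μ := aemeasurable_of_map_neZero (by rw [hws]; infer_instance)
  have hpair := hindep.indepFun_prodMk₀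
    (by rintro (i | _) <;> [fin_cases i <;> assumption; exact hmeas.aemeasurable])
    (Sum.inl 0) (Sum.inl 1) (Sum.inr ()) (by simp) (by simp)
  have hlaw : μ.map (fun ω => ((wc ω, ws ω), θ ω))
      = ((gaussianReal 0 (σ ^ 2).toNNReal).prod (gaussianReal 0 (σ ^ 2).toNNReal)).prod
          (μ.map θ) := by
    rw [map_prodMk_prodMk_eq_prod_of_indepFun hwc' hws' hθ.aemeasurable
      (hindep.indepFun (i := Sum.inl 0) (j := Sum.inl 1) (by simp))
      (hpair.comp measurable_id (by fun_prop : Measurable fun y : Fin D → ℝ => y ⬝ᵥ x)),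
      hwc, hws]
  refine ⟨fun q => ?_, fun hψ m v hmap => ?_⟩
  · have hchar := charFun_map_phaseShiftedUnit hwc' hws' hθ.aemeasurable hlaw ψ q
    rw [Real.coe_toNNReal _ (sq_nonneg σ), charFun_apply_real,
      integral_map (by unfold phaseShiftedUnit; fun_prop) (by fun_prop)] at hchar
    rw [← hchar]
    congr 1 with ω
    simp only [phaseShiftedUnit, θ, Complex.ofReal_add, Complex.ofReal_mul]
    ring_nf
  · exact ae_sin_two_mul_eq_zero_of_map_phaseShiftedUnit_eq_gaussianReal hwc' hws'
      hθ.aemeasurable hlaw (by rw [hfreq x, gaussianReal_map_neg, neg_zero]) (by simp [hσ.ne'])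
      hψ hmap
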